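/- Let F be a non-empty simple graph and B a convex subset of the space of symmetric N×N matrices with entries in [0,1] and zero diagonal. Then sup_{X,Y ∈ B} |hom_F(X) − hom_F(Y)| ≤ N · sup_{X,Y∈B} ‖X − Y‖_op · Σ_{e ∈ E(F)} sup_{W ∈ B} hom_{F_{(e)}}(W), where F_{(e)} is the induced subgraph on V(F) minus the two endpoints of e. -/

import Mathlib

/-- The ℓ²→ℓ² operator norm of a real N×N matrix. -/
noncomputable def opNorm {N : ℕ} (M : Matrix (Fin N) (Fin N) ℝ) : ℝ :=
  ‖(Matrix.toEuclideanCLM (𝕜 := ℝ) M : EuclideanSpace ℝ (Fin N) →L[ℝ] EuclideanSpace ℝ (Fin N))‖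

/-- The space `𝒳_N` of symmetric N×N matrices with entries in `[0,1]` and zero
diagonal. -/
def XN (N : ℕ) : Set (Matrix (Fin N) (Fin N) ℝ) :=
  {X | X.IsSymm ∧ (∀ i j, X i j ∈ Set.Icc (0:ℝ) 1) ∧ ∀ i, X i i = 0}

/-- Homomorphism counting function of the induced subgraph `F[s]`. -/
noncomputable def homOn {n N : ℕ} (F : SimpleGraph (Fin n)) [DecidableRel F.Adj]
    (s : Finset (Fin n)) (X : Matrix (Fin N) (Fin N) ℝ) : ℝ :=
  ∑ φ : {x // x ∈ s} → Fin N,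
    ∏ q ∈ Finset.univ.filter
        (fun q : {x // x ∈ s} × {x // x ∈ s} =>
          (q.1 : Fin n) < (q.2 : Fin n) ∧ F.Adj q.1 q.2),
      X (φ q.1) (φ q.2)

/-!
Along the segment `W t = Y + t • (X - Y)`, which stays in `B` by convexity, `hom_F (W t)` is a
polynomial in `t` with derivative `∑ₑ ∑_φ (∏_{q ≠ e} W t (φ q)) (X - Y) (φ a) (φ b)`, `e = ab`.
Once `φ` is fixed off `{a, b}`, no edge other than `e` meets both `a` and `b`, so the weight of
the remaining edges factors as `f (φ a) * g (φ b) * w`, where `w` is the weight of `φ` in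
`hom_{F_(e)}` and `|f|, |g| ≤ 1`. The sum over `(φ a, φ b)` is then `⟪f, (X - Y) g⟫`, bounded by
`‖f‖ ‖g‖ ‖X - Y‖_op ≤ N ‖X - Y‖_op`; the mean value theorem finishes.
-/

open Finset

theorem norm_toLp_le_sqrt_card {ι : Type*} [Fintype ι] (f : ι → ℝ) (hf : ∀ i, |f i| ≤ 1) :
    ‖WithLp.toLp 2 f‖ ≤ √(Fintype.card ι) := by
  rw [EuclideanSpace.norm_eq]
  gcongr
  calc ∑ i, ‖f i‖ ^ 2 ≤ ∑ _i : ι, (1 : ℝ) :=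
        sum_le_sum fun i _ => pow_le_one₀ (norm_nonneg _) (hf i)
    _ = Fintype.card ι := by simp

theorem abs_sum_mul_mul_le_card_mul_opNorm {N : ℕ} (Z : Matrix (Fin N) (Fin N) ℝ)
    (f g : Fin N → ℝ) (hf : ∀ u, |f u| ≤ 1) (hg : ∀ v, |g v| ≤ 1) :
    |∑ u, ∑ v, f u * Z u v * g v| ≤ N * opNorm Z := by
  have hdot : ∑ u, ∑ v, f u * Z u v * g v =
      inner ℝ (WithLp.toLp 2 f) (Matrix.toEuclideanCLM (𝕜 := ℝ) Z (WithLp.toLp 2 g)) := by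
    simp only [Matrix.inner_toEuclideanCLM, dotProduct, Matrix.mulVec, mul_sum, mul_assoc]
  have hf' := norm_toLp_le_sqrt_card f hf
  have hg' := norm_toLp_le_sqrt_card g hg
  rw [hdot]
  calc _ ≤ ‖WithLp.toLp 2 f‖ * (opNorm Z * ‖WithLp.toLp 2 g‖) :=
        (abs_real_inner_le_norm _ _).trans
          (mul_le_mul_of_nonneg_left (ContinuousLinearMap.le_opNorm _ _) (norm_nonneg _))
    _ ≤ √N * (opNorm Z * √N) := by
        have : 0 ≤ opNorm Z := norm_nonneg _
        simp only [Fintype.card_fin] at hf' hg'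
        gcongr
    _ = N * opNorm Z := by
        rw [mul_left_comm, Real.mul_self_sqrt N.cast_nonneg, mul_comm]

theorem abs_sum_weighted_bilinear_le {Ω : Type*} [Fintype Ω] {N : ℕ}
    (Z : Matrix (Fin N) (Fin N) ℝ) {f g : Ω → Fin N → ℝ}
    (hf : ∀ ω u, |f ω u| ≤ 1) (hg : ∀ ω v, |g ω v| ≤ 1) {γ : Ω → ℝ} (hγ : ∀ ω, 0 ≤ γ ω) :
    |∑ ω, ∑ u, ∑ v, γ ω * (f ω u * Z u v * g ω v)| ≤ N * opNorm Z * ∑ ω, γ ω := by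
  simp only [← mul_sum]
  calc _ ≤ ∑ ω, |γ ω * ∑ u, ∑ v, f ω u * Z u v * g ω v| := abs_sum_le_sum_abs _ _
    _ ≤ ∑ ω, γ ω * (N * opNorm Z) := sum_le_sum fun ω _ => by
        rw [abs_mul, abs_of_nonneg (hγ ω)]
        exact mul_le_mul_of_nonneg_left
          (abs_sum_mul_mul_le_card_mul_opNorm Z _ _ (hf ω) (hg ω)) (hγ ω)
    _ = N * opNorm Z * ∑ ω, γ ω := by rw [← sum_mul, mul_comm]

section ExtendPair

variable {V α : Type*} [Fintype V] [DecidableEq V]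

def extendPair (a b : V) (ψ : {x // x ∈ ({a, b}ᶜ : Finset V)} → α) (u v : α) : V → α :=
  fun x => if h : x ∈ ({a, b}ᶜ : Finset V) then ψ ⟨x, h⟩ else if x = a then u else v

variable {a b : V}

section
variable {ψ : {x // x ∈ ({a, b}ᶜ : Finset V)} → α} {u v : α}

theorem extendPair_of_mem {x : V} (hx : x ∈ ({a, b}ᶜ : Finset V)) :
    extendPair a b ψ u v x = ψ ⟨x, hx⟩ :=
  dif_pos hx

theorem extendPair_comp_val : extendPair a b ψ u v ∘ Subtype.val = ψ :=
  funext fun x => extendPair_of_mem x.2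

@[simp]
theorem extendPair_left : extendPair a b ψ u v a = u := by
  simp [extendPair]

@[simp]
theorem extendPair_right (hab : a ≠ b) : extendPair a b ψ u v b = v := by
  simp [extendPair, hab.symm]

theorem extendPair_congr_left {x : V} (hx : x ≠ a) (u' : α) :
    extendPair a b ψ u v x = extendPair a b ψ u' v x := by
  simp [extendPair, hx]

theorem extendPair_congr_right {x : V} (hx : x ≠ b) (v' : α) :
    extendPair a b ψ u v x = extendPair a b ψ u v' x := by
  by_cases hxa : x = a <;> simp [extendPair, hx, hxa]

end

def splitAtPair (hab : a ≠ b) :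
    (V → α) ≃ ({x // x ∈ ({a, b}ᶜ : Finset V)} → α) × α × α where
  toFun φ := (fun x => φ x, φ a, φ b)
  invFun p := extendPair a b p.1 p.2.1 p.2.2
  left_inv φ := by
    funext x
    by_cases hx : x ∈ ({a, b}ᶜ : Finset V)
    · exact extendPair_of_mem hx
    · obtain rfl | rfl : x = a ∨ x = b := by simpa [or_iff_not_imp_left] using hx
      exacts [extendPair_left, extendPair_right hab]
  right_inv p := by
    obtain ⟨ψ, u, v⟩ := p
    simp only [extendPair_left, extendPair_right hab, Prod.mk.injEq, and_true]
    exact extendPair_comp_val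

theorem sum_eq_sum_extendPair {M : Type*} [AddCommMonoid M] [Fintype α] (hab : a ≠ b)
    (f : (V → α) → M) :
    ∑ φ, f φ = ∑ ψ, ∑ u, ∑ v, f (extendPair a b ψ u v) := by
  rw [← (splitAtPair hab).symm.sum_comp, Fintype.sum_prod_type]
  simp only [Fintype.sum_prod_type]
  rfl

end ExtendPair

section Graph

variable {n N : ℕ} (F : SimpleGraph (Fin n)) [DecidableRel F.Adj]

def edgePairs : Finset (Fin n × Fin n) :=
  univ.filter fun e => e.1 < e.2 ∧ F.Adj e.1 e.2

def homWeight (s : Finset (Fin n)) (W : Matrix (Fin N) (Fin N) ℝ)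
    (ψ : {x // x ∈ s} → Fin N) : ℝ :=
  ∏ q ∈ univ.filter (fun q : {x // x ∈ s} × {x // x ∈ s} =>
    (q.1 : Fin n) < (q.2 : Fin n) ∧ F.Adj q.1 q.2), W (ψ q.1) (ψ q.2)

theorem homOn_eq_sum_homWeight (s : Finset (Fin n)) (W : Matrix (Fin N) (Fin N) ℝ) :
    homOn F s W = ∑ ψ, homWeight F s W ψ :=
  rfl

theorem homWeight_comp_val (s : Finset (Fin n)) (W : Matrix (Fin N) (Fin N) ℝ)
    (φ : Fin n → Fin N) :
    homWeight F s W (φ ∘ Subtype.val) =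
      ∏ q ∈ (edgePairs F).filter (fun q => q.1 ∈ s ∧ q.2 ∈ s), W (φ q.1) (φ q.2) := by
  have hmap : (edgePairs F).filter (fun q => q.1 ∈ s ∧ q.2 ∈ s) =
      (univ.filter (fun q : {x // x ∈ s} × {x // x ∈ s} =>
        (q.1 : Fin n) < (q.2 : Fin n) ∧ F.Adj q.1 q.2)).map
        ((Function.Embedding.subtype _).prodMap (Function.Embedding.subtype _)) := by
    ext ⟨x, y⟩
    simp only [edgePairs, mem_filter, mem_univ, true_and, mem_map, Prod.exists,
      Function.Embedding.prodMap, Function.Embedding.coe_subtype, Prod.map, Prod.mk.injEq,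
      Function.Embedding.coeFn_mk, Subtype.exists, exists_and_right, exists_eq_right_right]
    aesop
  rw [hmap, prod_map]
  rfl

theorem homWeight_nonneg {s : Finset (Fin n)} {W : Matrix (Fin N) (Fin N) ℝ}
    (hW : ∀ i j, W i j ∈ Set.Icc 0 1) (ψ : {x // x ∈ s} → Fin N) : 0 ≤ homWeight F s W ψ :=
  prod_nonneg fun _ _ => (hW _ _).1

theorem homOn_nonneg {s : Finset (Fin n)} {W : Matrix (Fin N) (Fin N) ℝ}
    (hW : ∀ i j, W i j ∈ Set.Icc 0 1) : 0 ≤ homOn F s W :=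
  sum_nonneg fun ψ _ => homWeight_nonneg F hW ψ

def homCount (X : Matrix (Fin N) (Fin N) ℝ) : ℝ :=
  ∑ φ : Fin n → Fin N, ∏ q ∈ edgePairs F, X (φ q.1) (φ q.2)

theorem homOn_univ (X : Matrix (Fin N) (Fin N) ℝ) : homOn F univ X = homCount F X := by
  rw [homOn_eq_sum_homWeight, ← (Equiv.arrowCongr (Equiv.subtypeUnivEquiv mem_univ).symm
    (Equiv.refl (Fin N))).sum_comp]
  refine sum_congr rfl fun φ _ => (homWeight_comp_val F univ X φ).trans ?_
  simp only [mem_univ, and_self, filter_true]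

variable {F}

theorem ne_of_mem_erase_edgePairs {e q : Fin n × Fin n} (he : e ∈ edgePairs F)
    (hq : q ∈ (edgePairs F).erase e) (ha : q.1 = e.1 ∨ q.2 = e.1) :
    q.1 ≠ e.2 ∧ q.2 ≠ e.2 := by
  obtain ⟨a, b⟩ := e
  obtain ⟨x, y⟩ := q
  simp only [edgePairs, mem_erase, mem_filter, mem_univ, true_and, ne_eq, Prod.mk.injEq] at *
  omega

theorem exists_factor_prod_erase_edgePairs {e : Fin n × Fin n} (he : e ∈ edgePairs F)
    {W : Matrix (Fin N) (Fin N) ℝ} (hW : ∀ i j, W i j ∈ Set.Icc 0 1) :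
    ∃ f g : ({x // x ∈ ({e.1, e.2}ᶜ : Finset (Fin n))} → Fin N) → Fin N → ℝ,
      (∀ ψ u, |f ψ u| ≤ 1) ∧ (∀ ψ v, |g ψ v| ≤ 1) ∧ ∀ ψ u v,
        ∏ q ∈ (edgePairs F).erase e,
            W (extendPair e.1 e.2 ψ u v q.1) (extendPair e.1 e.2 ψ u v q.2) =
          f ψ u * g ψ v * homWeight F {e.1, e.2}ᶜ W ψ := by
  set E := (edgePairs F).erase e
  let touches (x : Fin n) (q : Fin n × Fin n) : Prop := q.1 = x ∨ q.2 = x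
  have hunit {T : Finset (Fin n × Fin n)} (φ : Fin n → Fin N) :
      |∏ q ∈ T, W (φ q.1) (φ q.2)| ≤ 1 := by
    rw [abs_prod]
    exact prod_le_one (fun q _ => abs_nonneg _)
      fun q _ => abs_le.2 ⟨by linarith [(hW (φ q.1) (φ q.2)).1], (hW _ _).2⟩
  -- The edges through `e.1` avoid `e.2`, so the value placed at `e.2` in `f` is irrelevant,
  -- and symmetrically for `g`.
  refine ⟨fun ψ u => ∏ q ∈ E.filter (touches e.1), W (extendPair e.1 e.2 ψ u u q.1)
      (extendPair e.1 e.2 ψ u u q.2),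
    fun ψ v => ∏ q ∈ (E.filter (¬ touches e.1 ·)).filter (touches e.2),
      W (extendPair e.1 e.2 ψ v v q.1) (extendPair e.1 e.2 ψ v v q.2),
    fun ψ u => hunit _, fun ψ v => hunit _, fun ψ u v => ?_⟩
  rw [← prod_filter_mul_prod_filter_not E (touches e.1),
    ← prod_filter_mul_prod_filter_not (E.filter (¬ touches e.1 ·)) (touches e.2), ← mul_assoc]
  congr 1
  congr 1
  · refine prod_congr rfl fun q hq => ?_
    obtain ⟨hqE, hqa⟩ := mem_filter.1 hq
    obtain ⟨h1, h2⟩ := ne_of_mem_erase_edgePairs he hqE hqa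
    rw [extendPair_congr_right h1 u, extendPair_congr_right h2 u]
  · refine prod_congr rfl fun q hq => ?_
    obtain ⟨h1, h2⟩ : q.1 ≠ e.1 ∧ q.2 ≠ e.1 := by
      simpa [touches, not_or] using (mem_filter.1 (mem_filter.1 hq).1).2
    rw [extendPair_congr_left h1 v, extendPair_congr_left h2 v]
  · conv_rhs => rw [← extendPair_comp_val (ψ := ψ) (u := u) (v := v), homWeight_comp_val]
    refine prod_congr ?_ fun _ _ => rfl
    ext q
    simp only [E, touches, edgePairs, mem_filter, mem_erase, mem_univ, true_and, mem_compl,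
      mem_insert, mem_singleton]
    refine ⟨by tauto, fun h => ⟨⟨⟨?_, h.1⟩, by tauto⟩, by tauto⟩⟩
    rintro rfl
    tauto

theorem abs_sum_prod_erase_edgePairs_mul_le {e : Fin n × Fin n} (he : e ∈ edgePairs F)
    {W : Matrix (Fin N) (Fin N) ℝ} (hW : ∀ i j, W i j ∈ Set.Icc 0 1)
    (Z : Matrix (Fin N) (Fin N) ℝ) :
    |∑ φ : Fin n → Fin N,
        (∏ q ∈ (edgePairs F).erase e, W (φ q.1) (φ q.2)) * Z (φ e.1) (φ e.2)| ≤
      N * opNorm Z * homOn F {e.1, e.2}ᶜ W := by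
  have hab : e.1 ≠ e.2 := (mem_filter.1 he).2.1.ne
  obtain ⟨f, g, hf, hg, hfactor⟩ := exists_factor_prod_erase_edgePairs he hW
  rw [sum_eq_sum_extendPair hab, homOn_eq_sum_homWeight]
  convert abs_sum_weighted_bilinear_le Z hf hg (homWeight_nonneg F hW) using 5
  rw [hfactor, extendPair_left, extendPair_right hab]
  ring

end Graph

section Derivative

variable {n N : ℕ} (F : SimpleGraph (Fin n)) [DecidableRel F.Adj]

def homDeriv (W Z : Matrix (Fin N) (Fin N) ℝ) : ℝ :=
  ∑ e ∈ edgePairs F, ∑ φ : Fin n → Fin N,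
    (∏ q ∈ (edgePairs F).erase e, W (φ q.1) (φ q.2)) * Z (φ e.1) (φ e.2)

theorem hasDerivAt_homCount_add_smul (W Z : Matrix (Fin N) (Fin N) ℝ) (t : ℝ) :
    HasDerivAt (fun s : ℝ => homCount F (W + s • Z)) (homDeriv F (W + t • Z) Z) t := by
  have hentry (i j : Fin N) : HasDerivAt (fun s : ℝ => (W + s • Z) i j) (Z i j) t := by
    simpa using ((hasDerivAt_id t).mul_const (Z i j)).const_add (W i j)
  rw [homDeriv, sum_comm]
  exact HasDerivAt.fun_sum fun φ _ => by
    simpa using HasDerivAt.fun_finsetProd fun q _ => hentry (φ q.1) (φ q.2)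

variable {F}

theorem abs_homDeriv_le {W : Matrix (Fin N) (Fin N) ℝ} (hW : ∀ i j, W i j ∈ Set.Icc 0 1)
    (Z : Matrix (Fin N) (Fin N) ℝ) :
    |homDeriv F W Z| ≤ N * opNorm Z * ∑ e ∈ edgePairs F, homOn F {e.1, e.2}ᶜ W := by
  rw [mul_sum]
  exact (abs_sum_le_sum_abs _ _).trans
    (sum_le_sum fun e he => abs_sum_prod_erase_edgePairs_mul_le he hW Z)

end Derivative

theorem hom_fluctuation_on_convex_general {n N : ℕ}
    (F : SimpleGraph (Fin n)) [DecidableRel F.Adj]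
    (B : Set (Matrix (Fin N) (Fin N) ℝ)) (hBconv : Convex ℝ B) (hBX : B ⊆ XN N)
    (ε : ℝ) (hdiam : ∀ X ∈ B, ∀ Y ∈ B, opNorm (X - Y) ≤ ε)
    (Mb : Fin n × Fin n → ℝ)
    (hMb : ∀ e ∈ Finset.univ.filter
        (fun e : Fin n × Fin n => e.1 < e.2 ∧ F.Adj e.1 e.2),
      ∀ W ∈ B, homOn F ({e.1, e.2}ᶜ) W ≤ Mb e) :
    ∀ X ∈ B, ∀ Y ∈ B,
      |homOn F Finset.univ X - homOn F Finset.univ Y| ≤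
        (N : ℝ) * ε *
          ∑ e ∈ Finset.univ.filter
              (fun e : Fin n × Fin n => e.1 < e.2 ∧ F.Adj e.1 e.2),
            Mb e := by
  intro X hX Y hY
  have hε : 0 ≤ ε := (norm_nonneg _).trans (hdiam X hX Y hY)
  have hbound : ∀ t ∈ Set.Icc (0 : ℝ) 1,
      ‖homDeriv F (Y + t • (X - Y)) (X - Y)‖ ≤ N * ε * ∑ e ∈ edgePairs F, Mb e := by
    intro t ht
    have hWt := hBconv.add_smul_sub_mem hY hX ht
    have hW := (hBX hWt).2.1
    calc ‖homDeriv F (Y + t • (X - Y)) (X - Y)‖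
        ≤ N * opNorm (X - Y) * ∑ e ∈ edgePairs F, homOn F {e.1, e.2}ᶜ (Y + t • (X - Y)) :=
          abs_homDeriv_le hW _
      _ ≤ N * ε * ∑ e ∈ edgePairs F, Mb e := by
          gcongr with e he
          · exact sum_nonneg fun e _ => homOn_nonneg F hW
          · exact hdiam X hX Y hY
          · exact hMb e he _ hWt
  have hmvt := (convex_Icc (0 : ℝ) 1).norm_image_sub_le_of_norm_hasDerivWithin_le
    (fun t _ => (hasDerivAt_homCount_add_smul F Y (X - Y) t).hasDerivWithinAt) hbound
    (Set.left_mem_Icc.2 zero_le_one) (Set.right_mem_Icc.2 zero_le_one)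
  simpa [homOn_univ, edgePairs] using hmvt

/-- on a convex `B ⊆ 𝒳_N` whose `‖·‖_op`-diameter is at most `ε`, and
on which each `hom_{F_{(e)}}` is bounded by `Mb e`, the fluctuation of `hom_F` is at
most `N · ε · Σ_{e ∈ E(F)} Mb e`. -/
theorem hom_fluctuation_on_convex {n N : ℕ}
    (F : SimpleGraph (Fin n)) [DecidableRel F.Adj] (hne : F.edgeSet.Nonempty)
    (B : Set (Matrix (Fin N) (Fin N) ℝ)) (hBconv : Convex ℝ B) (hBX : B ⊆ XN N)
    (ε : ℝ) (hdiam : ∀ X ∈ B, ∀ Y ∈ B, opNorm (X - Y) ≤ ε)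
    (Mb : Fin n × Fin n → ℝ)
    (hMb : ∀ e ∈ Finset.univ.filter
        (fun e : Fin n × Fin n => e.1 < e.2 ∧ F.Adj e.1 e.2),
      ∀ W ∈ B, homOn F ({e.1, e.2}ᶜ) W ≤ Mb e) :
    ∀ X ∈ B, ∀ Y ∈ B,
      |homOn F Finset.univ X - homOn F Finset.univ Y| ≤
        (N : ℝ) * ε *
          ∑ e ∈ Finset.univ.filter
              (fun e : Fin n × Fin n => e.1 < e.2 ∧ F.Adj e.1 e.2),
            Mb e :=
  hom_fluctuation_on_convex_general F B hBconv hBX ε hdiam Mb hMb
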